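/- Let m ≥ n ≥ 2 and fix matrices U ∈ ℝ^{m×(m−1)} and V ∈ ℝ^{n×(n−1)} satisfying Uᵀ·1_m = 0, Uᵀ U = I_{m−1}, Vᵀ·1_n = 0, and Vᵀ V = I_{n−1}. Then a matrix P ∈ ℝ^{m×n} satisfies Pᵀ P = I_n, P·1_n = √(n/m)·1_m, and Pᵀ·1_m = √(m/n)·1_n if and only if there exists Q ∈ ℝ^{(m−1)×(n−1)} with Qᵀ Q = I_{n−1} such that P = (1/√(mn))·1_m 1_nᵀ + U Q Vᵀ. -/

import Mathlib

open Matrix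

/-!
Write `u = 1_m/√m` and `v = 1_n/√n`. Since `[u | U]` is square with orthonormal columns, its rows
are orthonormal too, i.e. `U Uᵀ = I - u uᵀ`, and likewise `V Vᵀ = I - v vᵀ`. The marginal
constraints say exactly `P v = u` and `Pᵀ u = v`. For such a semi-orthogonal `P`, the matrix
`Q = Uᵀ P V` is semi-orthogonal and `U Q Vᵀ = (I - u uᵀ) P (I - v vᵀ) = P - u vᵀ`; conversely
`u vᵀ + U Q Vᵀ` is semi-orthogonal and satisfies the marginals because `U, V` are orthogonal to
`u, v`.
-/

namespace Matrix

theorem mul_transpose_eq_one_sub_of_card_eq_succ {ι ι' : Type*} [Fintype ι] [Fintype ι']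
    [DecidableEq ι] [DecidableEq ι'] {u : Matrix ι Unit ℝ} {U : Matrix ι ι' ℝ}
    (hcard : Fintype.card ι = Fintype.card ι' + 1) (hu : uᵀ * u = 1) (hUu : Uᵀ * u = 0)
    (hU : Uᵀ * U = 1) : U * Uᵀ = 1 - u * uᵀ := by
  have huU : uᵀ * U = 0 := by simpa using congrArg transpose hUu
  have e : ι ≃ Unit ⊕ ι' := Fintype.equivOfCardEq (by simp [hcard, add_comm])
  have hsq : fromCols u U * fromRows uᵀ Uᵀ = 1 := by
    rw [fromCols_mul_fromRows_eq_one_comm e, fromRows_mul_fromCols, hu, huU, hUu, hU,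
      fromBlocks_one]
  rw [fromCols_mul_fromRows] at hsq
  rw [← hsq, add_sub_cancel_left]

section SemiOrthogonal

variable {ι ι' κ κ' : Type*} [Fintype ι] [Fintype ι'] [Fintype κ] [Fintype κ']
  {u : Matrix ι Unit ℝ} {v : Matrix κ Unit ℝ} {U : Matrix ι ι' ℝ} {V : Matrix κ κ' ℝ}
  {P : Matrix ι κ ℝ}

theorem transpose_mul_self_eq_one_of_eq_mul_transpose_add [DecidableEq ι'] [DecidableEq κ]
    [DecidableEq κ'] {Q : Matrix ι' κ' ℝ} (hu : uᵀ * u = 1) (hv : vᵀ * v = 1) (hUu : Uᵀ * u = 0)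
    (hU : Uᵀ * U = 1) (hVv : Vᵀ * v = 0) (hV : V * Vᵀ = 1 - v * vᵀ) (hQ : Qᵀ * Q = 1)
    (hP : P = u * vᵀ + U * Q * Vᵀ) :
    Pᵀ * P = 1 ∧ P * v = u ∧ Pᵀ * u = v := by
  have huU : uᵀ * U = 0 := by simpa using congrArg transpose hUu
  subst hP
  refine ⟨?_, ?_, ?_⟩
  · calc (u * vᵀ + U * Q * Vᵀ)ᵀ * (u * vᵀ + U * Q * Vᵀ)
        = v * (uᵀ * u) * vᵀ + v * (uᵀ * U) * (Q * Vᵀ) + V * Qᵀ * (Uᵀ * u) * vᵀ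
          + V * (Qᵀ * (Uᵀ * U) * Q) * Vᵀ := by
          simp only [transpose_add, transpose_mul, transpose_transpose, Matrix.add_mul,
            Matrix.mul_add, Matrix.mul_assoc]
          abel
      _ = v * vᵀ + V * Vᵀ := by simp [hu, huU, hUu, hU, hQ]
      _ = 1 := by rw [hV, add_sub_cancel]
  · calc (u * vᵀ + U * Q * Vᵀ) * v = u * (vᵀ * v) + U * Q * (Vᵀ * v) := by
          simp only [Matrix.add_mul, Matrix.mul_assoc]
      _ = u := by simp [hv, hVv]
  · calc (u * vᵀ + U * Q * Vᵀ)ᵀ * u = v * (uᵀ * u) + V * Qᵀ * (Uᵀ * u) := by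
          simp only [transpose_add, transpose_mul, transpose_transpose, Matrix.add_mul,
            Matrix.mul_assoc]
      _ = v := by simp [hu, hUu]

theorem eq_mul_transpose_add_of_transpose_mul_self_eq_one [DecidableEq ι] [DecidableEq κ]
    [DecidableEq κ'] (hv : vᵀ * v = 1) (hU : U * Uᵀ = 1 - u * uᵀ) (hVv : Vᵀ * v = 0)
    (hV : Vᵀ * V = 1) (hV' : V * Vᵀ = 1 - v * vᵀ) (hP : Pᵀ * P = 1) (hPv : P * v = u)
    (hPu : Pᵀ * u = v) :
    (Uᵀ * P * V)ᵀ * (Uᵀ * P * V) = 1 ∧ P = u * vᵀ + U * (Uᵀ * P * V) * Vᵀ := by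
  have huP : uᵀ * P = vᵀ := by simpa using congrArg transpose hPu
  constructor
  · calc (Uᵀ * P * V)ᵀ * (Uᵀ * P * V) = Vᵀ * (Pᵀ * (U * Uᵀ) * P) * V := by
          simp only [transpose_mul, transpose_transpose, Matrix.mul_assoc]
      _ = Vᵀ * V - (Vᵀ * (Pᵀ * u)) * (uᵀ * P * V) := by
          rw [hU, Matrix.mul_sub, Matrix.sub_mul, Matrix.mul_sub, Matrix.sub_mul, Matrix.mul_one,
            hP, Matrix.mul_one]
          simp only [Matrix.mul_assoc]
      _ = 1 := by rw [hPu, hVv, hV, Matrix.zero_mul, sub_zero]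
  · have hUQV : U * (Uᵀ * P * V) * Vᵀ = P - u * vᵀ :=
      calc U * (Uᵀ * P * V) * Vᵀ = (1 - u * uᵀ) * P * (1 - v * vᵀ) := by
            rw [← hU, ← hV']; simp only [Matrix.mul_assoc]
        _ = P - (P * v) * vᵀ - u * (uᵀ * P) + u * ((uᵀ * P) * v) * vᵀ := by
            simp only [Matrix.sub_mul, Matrix.mul_sub, Matrix.one_mul, Matrix.mul_one,
              Matrix.mul_assoc]
            abel
        _ = P - u * vᵀ := by rw [hPv, huP, hv, Matrix.mul_one]; abel
    rw [hUQV, add_sub_cancel]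

theorem transpose_mul_self_eq_one_and_marginals_iff [DecidableEq ι] [DecidableEq ι']
    [DecidableEq κ] [DecidableEq κ'] (hu : uᵀ * u = 1) (hv : vᵀ * v = 1) (hUu : Uᵀ * u = 0)
    (hU : Uᵀ * U = 1) (hU' : U * Uᵀ = 1 - u * uᵀ) (hVv : Vᵀ * v = 0) (hV : Vᵀ * V = 1)
    (hV' : V * Vᵀ = 1 - v * vᵀ) :
    (Pᵀ * P = 1 ∧ P * v = u ∧ Pᵀ * u = v) ↔
      ∃ Q : Matrix ι' κ' ℝ, Qᵀ * Q = 1 ∧ P = u * vᵀ + U * Q * Vᵀ :=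
  ⟨fun ⟨hP, hPv, hPu⟩ =>
    ⟨_, eq_mul_transpose_add_of_transpose_mul_self_eq_one hv hU' hVv hV hV' hP hPv hPu⟩,
   fun ⟨_, hQ, hP⟩ =>
    transpose_mul_self_eq_one_of_eq_mul_transpose_add hu hv hUu hU hVv hV' hQ hP⟩

end SemiOrthogonal

noncomputable def unitOnesCol (ι : Type*) [Fintype ι] : Matrix ι Unit ℝ :=
  (√(Fintype.card ι))⁻¹ • replicateCol Unit (fun _ => 1)

section UnitOnesCol

variable {ι κ : Type*} [Fintype ι]

theorem mul_unitOnesCol (A : Matrix κ ι ℝ) :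
    A * unitOnesCol ι = (√(Fintype.card ι))⁻¹ • replicateCol Unit (A *ᵥ fun _ => 1) := by
  rw [unitOnesCol, Matrix.mul_smul, replicateCol_mulVec]

theorem unitOnesCol_transpose_mul_self [Nonempty ι] :
    (unitOnesCol ι)ᵀ * unitOnesCol ι = 1 := by
  have hcard : (0 : ℝ) < Fintype.card ι := by exact_mod_cast Fintype.card_pos
  ext
  simp [unitOnesCol, mul_apply, ← mul_inv, Real.mul_self_sqrt hcard.le, hcard.ne']

theorem unitOnesCol_mul_transpose [Fintype κ] :
    unitOnesCol ι * (unitOnesCol κ)ᵀ =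
      of fun _ _ => 1 / √(Fintype.card ι * Fintype.card κ) := by
  ext
  simp [unitOnesCol, mul_apply, Real.sqrt_mul (Nat.cast_nonneg _), mul_comm]

theorem mulVec_ones_eq_sqrt_div_iff [Fintype κ] [Nonempty κ] (P : Matrix ι κ ℝ) :
    (P *ᵥ (fun _ => 1) = fun _ => √(Fintype.card κ / Fintype.card ι)) ↔
      P * unitOnesCol κ = unitOnesCol ι := by
  have hκ : √(Fintype.card κ : ℝ) ≠ 0 := by positivity
  rw [mul_unitOnesCol, unitOnesCol, ← replicateCol_smul, ← replicateCol_smul, replicateCol_inj,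
    inv_smul_eq_iff₀ hκ]
  refine Eq.congr_right (funext fun _ => ?_)
  simp [div_eq_mul_inv]

end UnitOnesCol

end Matrix

theorem semi_orth_marginal_param (m n : ℕ) (hn : 2 ≤ n) (hmn : n ≤ m)
    (U : Matrix (Fin m) (Fin (m - 1)) ℝ) (V : Matrix (Fin n) (Fin (n - 1)) ℝ)
    (hU1 : Uᵀ *ᵥ (fun _ => (1 : ℝ)) = 0) (hU2 : Uᵀ * U = 1)
    (hV1 : Vᵀ *ᵥ (fun _ => (1 : ℝ)) = 0) (hV2 : Vᵀ * V = 1)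
    (P : Matrix (Fin m) (Fin n) ℝ) :
    (Pᵀ * P = 1
      ∧ (P *ᵥ (fun _ => (1 : ℝ)) = fun _ => Real.sqrt ((n : ℝ) / (m : ℝ)))
      ∧ (Pᵀ *ᵥ (fun _ => (1 : ℝ)) = fun _ => Real.sqrt ((m : ℝ) / (n : ℝ)))) ↔
    ∃ Q : Matrix (Fin (m - 1)) (Fin (n - 1)) ℝ, Qᵀ * Q = 1 ∧
      P = Matrix.of (fun _ _ => 1 / Real.sqrt ((m : ℝ) * (n : ℝ))) + U * Q * Vᵀ := by
  have : NeZero m := ⟨by omega⟩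
  have : NeZero n := ⟨by omega⟩
  have hu := unitOnesCol_transpose_mul_self (ι := Fin m)
  have hv := unitOnesCol_transpose_mul_self (ι := Fin n)
  have hUu : Uᵀ * unitOnesCol (Fin m) = 0 := by simp [mul_unitOnesCol, hU1]
  have hVv : Vᵀ * unitOnesCol (Fin n) = 0 := by simp [mul_unitOnesCol, hV1]
  have hU' := mul_transpose_eq_one_sub_of_card_eq_succ (by simp only [Fintype.card_fin]; omega) hu hUu hU2
  have hV' := mul_transpose_eq_one_sub_of_card_eq_succ (by simp only [Fintype.card_fin]; omega) hv hVv hV2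
  have hK := unitOnesCol_mul_transpose (ι := Fin m) (κ := Fin n)
  simp only [Fintype.card_fin] at hK
  rw [← hK, ← transpose_mul_self_eq_one_and_marginals_iff hu hv hUu hU2 hU' hVv hV2 hV',
    ← mulVec_ones_eq_sqrt_div_iff, ← mulVec_ones_eq_sqrt_div_iff]
  simp only [Fintype.card_fin]
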